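/- arXiv:2412.09970 — 2 statements merged into one kernel-verified Lean document; each statement's English description precedes it below -/
import Mathlib

section
/- For every δ ∈ (0,1) there exists a constant C = C(δ) > 0 such that for every natural number n and every real t with 0 < t < π, | (1/A_n^δ) · Σ_{k=0}^{n} A_{n−k}^{δ−1} · cos((2k+1)t) | ≤ C · ( 1/((n+1)^δ · (sin t)^δ) + 1/((n+1) · sin t) ). -/
/-!
Since `A_n^δ ≥ (n+1)^δ` (Bernoulli's inequality), it suffices to bound the sum by
`(1 + 1/δ) (sin t)^(-δ)`. The weights `A_{n-k}^{δ-1}` increase with `k`, satisfy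
`A_m^{δ-1} ≤ 1 / A_m^{1-δ} ≤ (m+1)^(δ-1)`, and have partial sums
`∑_{m<M} A_m^{δ-1} = M A_M^{δ-1} / δ ≤ M^δ / δ`. Taking `M = ⌊1 / sin t⌋`, the last `M` terms
are bounded absolutely and the others by Abel summation against
`∑_{k<j} cos ((2k+1)t) = sin (2jt) / (2 sin t)`.
-/

open Finset

/-- Cesàro numbers: `A_n^δ = (δ+1)(δ+2)⋯(δ+n)/n!`, with `A_0^δ = 1`. -/
noncomputable def cesaroA (δ : ℝ) (n : ℕ) : ℝ :=
  (∏ i ∈ Finset.range n, (δ + i + 1)) / n.factorial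

open Real

section Cesaro

variable {γ : ℝ}

@[simp]
lemma cesaroA_zero (γ : ℝ) : cesaroA γ 0 = 1 := by
  simp [cesaroA]

lemma cesaroA_succ (γ : ℝ) (n : ℕ) :
    cesaroA γ (n + 1) = cesaroA γ n * (1 + γ / (n + 1)) := by
  rw [cesaroA, cesaroA, prod_range_succ, Nat.factorial_succ]
  push_cast
  field_simp
  ring

lemma cesaroA_pos (hγ : -1 < γ) (n : ℕ) : 0 < cesaroA γ n :=
  div_pos (prod_pos fun i _ => by linarith [(i.cast_nonneg : (0 : ℝ) ≤ i)]) (by positivity)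

lemma cesaroA_antitone (h0 : -1 < γ) (h1 : γ ≤ 0) : Antitone (cesaroA γ) := by
  refine antitone_nat_of_succ_le fun n => ?_
  rw [cesaroA_succ]
  have : γ / (n + 1) ≤ 0 := div_nonpos_of_nonpos_of_nonneg h1 (by positivity)
  exact mul_le_of_le_one_right (cesaroA_pos h0 n).le (by linarith)

lemma add_one_mul_sum_range_cesaroA (γ : ℝ) (M : ℕ) :
    (γ + 1) * ∑ m ∈ range M, cesaroA γ m = M * cesaroA γ M := by
  induction M with
  | zero => simp
  | succ M ih =>
    rw [sum_range_succ, mul_add, ih, cesaroA_succ]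
    push_cast
    field_simp
    ring

lemma add_one_rpow_le_cesaroA (h0 : 0 ≤ γ) (h1 : γ ≤ 1) (n : ℕ) :
    ((n : ℝ) + 1) ^ γ ≤ cesaroA γ n := by
  induction n with
  | zero => simp
  | succ n ih =>
    have bernoulli : (1 + 1 / ((n : ℝ) + 1)) ^ γ ≤ 1 + γ / (n + 1) := by
      have : 0 ≤ 1 / ((n : ℝ) + 1) := by positivity
      have h := rpow_one_add_le_one_add_mul_self (s := 1 / ((n : ℝ) + 1)) (by linarith) h0 h1
      rwa [mul_one_div] at h
    calc (((n + 1 : ℕ) : ℝ) + 1) ^ γ = (((n : ℝ) + 1) * (1 + 1 / ((n : ℝ) + 1))) ^ γ := by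
          congr 1; push_cast; field_simp
      _ = ((n : ℝ) + 1) ^ γ * (1 + 1 / ((n : ℝ) + 1)) ^ γ := mul_rpow (by positivity) (by positivity)
      _ ≤ cesaroA γ n * (1 + γ / (n + 1)) :=
          mul_le_mul ih bernoulli (by positivity) ((rpow_nonneg (by positivity) γ).trans ih)
      _ = cesaroA γ (n + 1) := (cesaroA_succ γ n).symm

lemma cesaroA_neg_mul_cesaroA_le_one (hγ : |γ| ≤ 1) (n : ℕ) :
    cesaroA (-γ) n * cesaroA γ n ≤ 1 := by
  induction n with
  | zero => simp
  | succ n ih =>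
    have hx : |γ / (n + 1)| ≤ 1 := by
      rw [abs_div, abs_of_pos (by positivity : (0 : ℝ) < n + 1), div_le_one (by positivity)]
      linarith [(n.cast_nonneg : (0 : ℝ) ≤ n)]
    have hsq := (sq_le_one_iff_abs_le_one _).2 hx
    rw [cesaroA_succ, cesaroA_succ, neg_div,
      show ∀ a b x : ℝ, a * (1 + -x) * (b * (1 + x)) = a * b * (1 - x ^ 2) by intros; ring]
    exact mul_le_one₀ ih (by linarith) (by linarith [sq_nonneg (γ / (n + 1))])

lemma cesaroA_le_add_one_rpow (h0 : -1 ≤ γ) (h1 : γ ≤ 0) (n : ℕ) :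
    cesaroA γ n ≤ ((n : ℝ) + 1) ^ γ := by
  have hpos : 0 < cesaroA (-γ) n := cesaroA_pos (by linarith) n
  have hprod := cesaroA_neg_mul_cesaroA_le_one (γ := -γ) (abs_le.2 ⟨by linarith, by linarith⟩) n
  rw [neg_neg] at hprod
  calc cesaroA γ n ≤ 1 / cesaroA (-γ) n := by
        rw [le_div_iff₀ hpos]; linarith
    _ ≤ 1 / ((n : ℝ) + 1) ^ (-γ) :=
        one_div_le_one_div_of_le (by positivity) (add_one_rpow_le_cesaroA (by linarith) (by linarith) n)
    _ = ((n : ℝ) + 1) ^ γ := by rw [rpow_neg (by positivity), one_div, inv_inv]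

lemma sum_range_cesaroA_sub_one_le {δ : ℝ} (h0 : 0 < δ) (h1 : δ ≤ 1) (M : ℕ) :
    ∑ m ∈ range M, cesaroA (δ - 1) m ≤ (M : ℝ) ^ δ / δ := by
  rcases M.eq_zero_or_pos with rfl | hM
  · simp [zero_rpow h0.ne']
  have hM' : (0 : ℝ) < M := by exact_mod_cast hM
  have hsum := add_one_mul_sum_range_cesaroA (δ - 1) M
  rw [sub_add_cancel] at hsum
  rw [le_div_iff₀ h0, mul_comm, hsum]
  calc (M : ℝ) * cesaroA (δ - 1) M ≤ M * (M : ℝ) ^ (δ - 1) := by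
        gcongr
        exact (cesaroA_le_add_one_rpow (by linarith) (by linarith) M).trans
          (rpow_le_rpow_of_nonpos hM' (by linarith) (by linarith))
    _ = (M : ℝ) ^ δ := by rw [rpow_sub_one hM'.ne']; field_simp

end Cesaro

lemma two_mul_sin_mul_sum_range_cos (t : ℝ) (j : ℕ) :
    2 * sin t * ∑ k ∈ range j, cos ((2 * (k : ℝ) + 1) * t) = sin (2 * (j : ℝ) * t) := by
  induction j with
  | zero => simp
  | succ j ih =>
    have h := sin_sub_sin (2 * ((j : ℝ) + 1) * t) (2 * (j : ℝ) * t)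
    rw [show (2 * ((j : ℝ) + 1) * t - 2 * j * t) / 2 = t by ring,
      show (2 * ((j : ℝ) + 1) * t + 2 * j * t) / 2 = (2 * j + 1) * t by ring] at h
    rw [sum_range_succ, mul_add, ih]
    push_cast
    linarith

lemma abs_sum_range_cos_le {t : ℝ} (hs : 0 < sin t) (j : ℕ) :
    |∑ k ∈ range j, cos ((2 * (k : ℝ) + 1) * t)| ≤ 1 / (2 * sin t) := by
  rw [eq_div_of_mul_eq (by positivity) ((mul_comm _ _).trans (two_mul_sin_mul_sum_range_cos t j)),
    abs_div, abs_of_pos (by positivity : 0 < 2 * sin t)]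
  gcongr
  exact abs_sin_le_one _

lemma abs_sum_range_mul_le_of_monotone {f g : ℕ → ℝ} {B : ℝ} (hf : Monotone f) (hf0 : 0 ≤ f 0)
    (hg : ∀ j, |∑ i ∈ range j, g i| ≤ B) (J : ℕ) :
    |∑ i ∈ range (J + 1), f i * g i| ≤ 2 * f J * B := by
  have hfJ : 0 ≤ f J := hf0.trans (hf J.zero_le)
  have hB : 0 ≤ B := (abs_nonneg _).trans (hg 0)
  have hstep : ∀ i, 0 ≤ f (i + 1) - f i := fun i => sub_nonneg.2 (hf i.le_succ)
  have hby_parts := sum_range_by_parts f g (J + 1)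
  simp only [smul_eq_mul, add_tsub_cancel_right] at hby_parts
  rw [hby_parts]
  calc _ ≤ |f J * ∑ i ∈ range (J + 1), g i|
        + |∑ i ∈ range J, (f (i + 1) - f i) * ∑ j ∈ range (i + 1), g j| := abs_sub _ _
    _ ≤ f J * B + ∑ i ∈ range J, (f (i + 1) - f i) * B := by
        gcongr
        · rw [abs_mul, abs_of_nonneg hfJ]
          exact mul_le_mul_of_nonneg_left (hg _) hfJ
        · refine (abs_sum_le_sum_abs _ _).trans (sum_le_sum fun i _ => ?_)
          rw [abs_mul, abs_of_nonneg (hstep i)]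
          exact mul_le_mul_of_nonneg_left (hg _) (hstep i)
    _ = (2 * f J - f 0) * B := by rw [← sum_mul, sum_range_sub]; ring
    _ ≤ 2 * f J * B := by nlinarith

section CosineSum

variable {δ : ℝ}

lemma abs_sum_cesaroA_mul_cos_head_le (h0 : 0 < δ) (h1 : δ ≤ 1) {t : ℝ} (hs : 0 < sin t)
    (n J : ℕ) :
    |∑ k ∈ range (J + 1), cesaroA (δ - 1) (n - k) * cos ((2 * (k : ℝ) + 1) * t)| ≤
      cesaroA (δ - 1) (n - J) / sin t := by
  have hanti := cesaroA_antitone (γ := δ - 1) (by linarith) (by linarith)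
  have h := abs_sum_range_mul_le_of_monotone (f := fun k => cesaroA (δ - 1) (n - k))
    (fun _ _ hij => hanti (Nat.sub_le_sub_left hij n)) (cesaroA_pos (by linarith) n).le
    (abs_sum_range_cos_le hs) J
  rwa [show 2 * cesaroA (δ - 1) (n - J) * (1 / (2 * sin t)) = cesaroA (δ - 1) (n - J) / sin t by
    field_simp] at h

lemma abs_sum_cesaroA_mul_cos_tail_le (h0 : 0 < δ) (h1 : δ ≤ 1) (x : ℕ → ℝ) {n J M : ℕ}
    (hJM : J + M = n + 1) :
    |∑ i ∈ range M, cesaroA (δ - 1) (n - (J + i)) * cos (x (J + i))| ≤ (M : ℝ) ^ δ / δ := by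
  have hpos : ∀ m, 0 ≤ cesaroA (δ - 1) m := fun m => (cesaroA_pos (by linarith) m).le
  calc _ ≤ ∑ i ∈ range M, cesaroA (δ - 1) (n - (J + i)) := by
        refine (abs_sum_le_sum_abs _ _).trans (sum_le_sum fun i _ => ?_)
        rw [abs_mul, abs_of_nonneg (hpos _)]
        exact mul_le_of_le_one_right (hpos _) (abs_cos_le_one _)
    _ = ∑ m ∈ range M, cesaroA (δ - 1) m := by
        rw [← sum_range_reflect]
        exact sum_congr rfl fun i hi => by
          rw [mem_range] at hi
          congr 1
          omega
    _ ≤ (M : ℝ) ^ δ / δ := sum_range_cesaroA_sub_one_le h0 h1 M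

theorem abs_sum_cesaroA_mul_cos_le (h0 : 0 < δ) (h1 : δ ≤ 1) (n : ℕ) {t : ℝ} (hs : 0 < sin t) :
    |∑ k ∈ range (n + 1), cesaroA (δ - 1) (n - k) * cos ((2 * (k : ℝ) + 1) * t)| ≤
      (1 + 1 / δ) * (sin t)⁻¹ ^ δ := by
  set x := (sin t)⁻¹
  have hx0 : 0 < x := inv_pos.2 hs
  have tail_le : ∀ M : ℕ, (M : ℝ) ≤ x → (M : ℝ) ^ δ / δ ≤ x ^ δ / δ := fun M hM => by
    gcongr
  rcases le_or_gt ((n : ℝ) + 1) x with hn | hn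
  · have h := abs_sum_cesaroA_mul_cos_tail_le h0 h1 (fun k => (2 * (k : ℝ) + 1) * t)
      (zero_add (n + 1))
    simp only [zero_add] at h
    calc _ ≤ x ^ δ / δ := h.trans (tail_le (n + 1) (by exact_mod_cast hn))
      _ = 1 / δ * x ^ δ := by ring
      _ ≤ (1 + 1 / δ) * x ^ δ := by gcongr; linarith
  set M := ⌊x⌋₊
  have hMx : (M : ℝ) ≤ x := Nat.floor_le hx0.le
  have hxM : x < M + 1 := Nat.lt_floor_add_one x
  have hMn : M ≤ n := Nat.lt_succ_iff.1 (by exact_mod_cast hMx.trans_lt hn)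
  have head := abs_sum_cesaroA_mul_cos_head_le h0 h1 hs n (n - M)
  rw [Nat.sub_sub_self hMn] at head
  have tail := abs_sum_cesaroA_mul_cos_tail_le h0 h1 (fun k => (2 * (k : ℝ) + 1) * t)
    (show n - M + 1 + M = n + 1 by omega)
  have head_le : cesaroA (δ - 1) M / sin t ≤ x ^ δ :=
    calc cesaroA (δ - 1) M / sin t = cesaroA (δ - 1) M * x := div_eq_mul_inv _ _
      _ ≤ x ^ (δ - 1) * x := by
          gcongr
          exact (cesaroA_le_add_one_rpow (by linarith) (by linarith) M).trans
            (rpow_le_rpow_of_nonpos hx0 hxM.le (by linarith))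
      _ = x ^ δ := by rw [rpow_sub_one hx0.ne']; field_simp
  rw [show n + 1 = n - M + 1 + M by omega, sum_range_add]
  calc _ ≤ _ := abs_add_le _ _
    _ ≤ x ^ δ + x ^ δ / δ := add_le_add (head.trans head_le) (tail.trans (tail_le M hMx))
    _ = (1 + 1 / δ) * x ^ δ := by ring

end CosineSum

theorem stmt_0 :
    ∀ δ : ℝ, 0 < δ → δ < 1 → ∃ C : ℝ, 0 < C ∧
      ∀ n : ℕ, ∀ t : ℝ, 0 < t → t < Real.pi →
        |(1 / cesaroA δ n) *
            ∑ k ∈ Finset.range (n + 1), cesaroA (δ - 1) (n - k) * Real.cos ((2 * k + 1) * t)| ≤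
          C * (1 / ((n + 1 : ℝ) ^ δ * Real.sin t ^ δ) + 1 / ((n + 1 : ℝ) * Real.sin t)) := by
  intro δ h0 h1
  refine ⟨1 + 1 / δ, by positivity, fun n t ht0 htπ => ?_⟩
  have hs := sin_pos_of_pos_of_lt_pi ht0 htπ
  have hA := add_one_rpow_le_cesaroA h0.le h1.le n
  have hpow : (0 : ℝ) < ((n : ℝ) + 1) ^ δ := by positivity
  calc _ = |∑ k ∈ range (n + 1), cesaroA (δ - 1) (n - k) * cos ((2 * k + 1) * t)| / cesaroA δ n := by
        rw [abs_mul, abs_of_pos (one_div_pos.2 (hpow.trans_le hA)), one_div_mul_eq_div]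
    _ ≤ (1 + 1 / δ) * (sin t)⁻¹ ^ δ / ((n : ℝ) + 1) ^ δ :=
        div_le_div₀ (by positivity) (abs_sum_cesaroA_mul_cos_le h0 h1.le n hs) hpow hA
    _ = (1 + 1 / δ) * (1 / (((n : ℝ) + 1) ^ δ * sin t ^ δ)) := by
        rw [inv_rpow hs.le]; field_simp
    _ ≤ _ := by
        gcongr
        exact le_add_of_nonneg_right (by positivity)
end

section
/- There exists an absolute constant C > 0 such that for every integer k ≥ 0 and every (u1,u2) ∈ Γ with u1 > 0 and u2 > 0: |D*_{k,1}(u1,u2)| ≤ C/u1², |D*_{k,2}(u1,u2)| ≤ C·k/u1, and |D*_{k,3}(u1,u2)| ≤ C·k/u1. -/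
open MeasureTheory Finset

/-- The triangle `Γ = {(u₁,u₂) : 0 ≤ u₂ ≤ u₁/3, 0 ≤ u₁ ≤ 1}`. -/
def GammaT : Set (ℝ × ℝ) := {u | 0 ≤ u.2 ∧ u.2 ≤ u.1 / 3 ∧ 0 ≤ u.1 ∧ u.1 ≤ 1}

/-- The function `D*_{k,1}`. -/
noncomputable def Dstar1 (k : ℕ) (u : ℝ × ℝ) : ℝ :=
  2 * Real.cos (((k : ℝ) + 1 / 2) * Real.pi * u.2) *
    (Real.sin (Real.pi * u.2 / 2) * Real.sin (((k : ℝ) + 1) * Real.pi * (u.1 + u.2) / 2) *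
        Real.sin (((k : ℝ) + 1) * Real.pi * (u.1 - u.2) / 2)) /
      (Real.sin (Real.pi * u.2) * Real.sin (Real.pi * (u.1 + u.2) / 2) *
        Real.sin (Real.pi * (u.1 - u.2) / 2))

/-- The function `D*_{k,2}`. -/
noncomputable def Dstar2 (k : ℕ) (u : ℝ × ℝ) : ℝ :=
  2 * Real.cos (((k : ℝ) + 1 / 2) * Real.pi * (u.1 + u.2) / 2) *
    (Real.sin ((k : ℝ) * Real.pi * u.2) * Real.sin (Real.pi * (u.1 + u.2) / 4) *
        Real.sin (((k : ℝ) + 1) * Real.pi * (u.1 - u.2) / 2)) /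
      (Real.sin (Real.pi * u.2) * Real.sin (Real.pi * (u.1 + u.2) / 2) *
        Real.sin (Real.pi * (u.1 - u.2) / 2))

/-- The function `D*_{k,3}`. -/
noncomputable def Dstar3 (k : ℕ) (u : ℝ × ℝ) : ℝ :=
  2 * Real.cos (((k : ℝ) + 1 / 2) * Real.pi * (u.1 - u.2) / 2) *
    (Real.sin ((k : ℝ) * Real.pi * u.2) * Real.sin ((k : ℝ) * Real.pi * (u.1 + u.2) / 2) *
        Real.sin (Real.pi * (u.1 - u.2) / 4)) /
      (Real.sin (Real.pi * u.2) * Real.sin (Real.pi * (u.1 + u.2) / 2) *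
        Real.sin (Real.pi * (u.1 - u.2) / 2))

/-- On `[0, 4/3]`, `sin (π t / 2) ≥ t/2`. -/
lemma aux_sin_lb {t : ℝ} (h0 : 0 ≤ t) (h1 : t ≤ 4/3) :
    t / 2 ≤ Real.sin (Real.pi * t / 2) := by
  have hpi : 0 < Real.pi := Real.pi_pos
  rcases le_or_gt t 1 with ht | ht
  · have h := Real.mul_le_sin (x := Real.pi * t / 2)
      (by positivity) (by nlinarith)
    have e : 2 / Real.pi * (Real.pi * t / 2) = t := by field_simp
    rw [e] at h
    linarith
  · have e : Real.pi * t / 2 = Real.pi - Real.pi * (2 - t) / 2 := by ring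
    rw [e, Real.sin_pi_sub]
    have h := Real.mul_le_sin (x := Real.pi * (2 - t) / 2)
      (by nlinarith) (by nlinarith)
    have e2 : 2 / Real.pi * (Real.pi * (2 - t) / 2) = 2 - t := by field_simp
    rw [e2] at h
    linarith

/-- Key bounding lemma of the form of the Dstar functions. -/
lemma aux_key {c s1 s2 s3 d1 d2 d3 C1 C2 C3 E1 E2 E3 : ℝ}
    (hc : |c| ≤ 1) (h1 : |s1| ≤ C1) (h2 : |s2| ≤ C2) (h3 : |s3| ≤ C3)
    (hd1 : E1 ≤ d1) (hd2 : E2 ≤ d2) (hd3 : E3 ≤ d3)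
    (hE1 : 0 < E1) (hE2 : 0 < E2) (hE3 : 0 < E3) :
    |2 * c * (s1 * s2 * s3) / (d1 * d2 * d3)| ≤ 2 * (C1 * C2 * C3) / (E1 * E2 * E3) := by
  have hC1 : 0 ≤ C1 := (abs_nonneg _).trans h1
  have hC2 : 0 ≤ C2 := (abs_nonneg _).trans h2
  have hC3 : 0 ≤ C3 := (abs_nonneg _).trans h3
  have hd1' : 0 < d1 := hE1.trans_le hd1
  have hd2' : 0 < d2 := hE2.trans_le hd2
  have hd3' : 0 < d3 := hE3.trans_le hd3
  rw [abs_div]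
  apply div_le_div₀ (by positivity) ?_ (by positivity) ?_
  · have e : |2 * c * (s1 * s2 * s3)| = 2 * |c| * (|s1| * |s2| * |s3|) := by
      rw [abs_mul, abs_mul, abs_mul, abs_mul, abs_two]
    rw [e]
    have h12 : |s1| * |s2| ≤ C1 * C2 :=
      mul_le_mul h1 h2 (abs_nonneg _) hC1
    have h123 : |s1| * |s2| * |s3| ≤ C1 * C2 * C3 :=
      mul_le_mul h12 h3 (abs_nonneg _) (by positivity)
    have hc2 : 2 * |c| ≤ 2 * 1 := by nlinarith [abs_nonneg c]
    nlinarith [abs_nonneg c, abs_nonneg s1, abs_nonneg s2, abs_nonneg s3,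
      mul_nonneg (mul_nonneg (abs_nonneg s1) (abs_nonneg s2)) (abs_nonneg s3)]
  · rw [abs_of_pos (by positivity : (0:ℝ) < d1 * d2 * d3)]
    exact mul_le_mul (mul_le_mul hd1 hd2 hE2.le hd1'.le) hd3 hE3.le
      (by positivity)

theorem stmt_9 :
    ∃ C : ℝ, 0 < C ∧
      ∀ k : ℕ, ∀ u : ℝ × ℝ, u ∈ GammaT → 0 < u.1 → 0 < u.2 →
        |Dstar1 k u| ≤ C / u.1 ^ 2 ∧
        |Dstar2 k u| ≤ C * k / u.1 ∧
        |Dstar3 k u| ≤ C * k / u.1 := by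
  refine ⟨100, by norm_num, ?_⟩
  intro k u hu ha hb
  obtain ⟨hb0, hb3, ha0, ha1⟩ := hu
  set a := u.1 with haa
  set b := u.2 with hbb
  have hpi : 0 < Real.pi := Real.pi_pos
  have hpi4 : Real.pi ≤ 4 := Real.pi_le_four
  have hk : (0:ℝ) ≤ (k:ℝ) := Nat.cast_nonneg k
  have hab : 0 < a - b := by linarith
  -- denominator lower bounds
  have hd1 : 2 * b ≤ Real.sin (Real.pi * b) := by
    have h := Real.mul_le_sin (x := Real.pi * b) (by positivity) (by nlinarith)
    have e : 2 / Real.pi * (Real.pi * b) = 2 * b := by field_simp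
    linarith [e ▸ h]
  have hd2 : (a + b) / 2 ≤ Real.sin (Real.pi * (a + b) / 2) :=
    aux_sin_lb (by linarith) (by linarith)
  have hd3 : (a - b) / 2 ≤ Real.sin (Real.pi * (a - b) / 2) :=
    aux_sin_lb (by linarith) (by linarith)
  have hE1 : (0:ℝ) < 2 * b := by linarith
  have hE2 : (0:ℝ) < (a + b) / 2 := by linarith
  have hE3 : (0:ℝ) < (a - b) / 2 := by linarith
  -- numerator bounds from |sin x| ≤ |x|
  have habs : ∀ x : ℝ, 0 ≤ x → |Real.sin x| ≤ x := fun x hx => by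
    calc |Real.sin x| ≤ |x| := Real.abs_sin_le_abs
    _ = x := abs_of_nonneg hx
  refine ⟨?_, ?_, ?_⟩
  · -- Dstar1
    have key := aux_key (c := Real.cos (((k : ℝ) + 1 / 2) * Real.pi * b))
      (s1 := Real.sin (Real.pi * b / 2))
      (s2 := Real.sin (((k : ℝ) + 1) * Real.pi * (a + b) / 2))
      (s3 := Real.sin (((k : ℝ) + 1) * Real.pi * (a - b) / 2))
      (Real.abs_cos_le_one _)
      (habs _ (by positivity))
      (Real.abs_sin_le_one _) (Real.abs_sin_le_one _)
      hd1 hd2 hd3 hE1 hE2 hE3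
    refine le_trans key ?_
    rw [div_le_div_iff₀ (by positivity) (by positivity)]
    nlinarith [mul_nonneg (mul_nonneg hb0 ha.le) ha.le,
      mul_nonneg hb0 (mul_nonneg hb0 hb0),
      mul_nonneg (mul_nonneg hb0 hb0) ha.le,
      mul_nonneg hb0 (sq_nonneg (a - 3*b))]
  · -- Dstar2
    have key := aux_key (c := Real.cos (((k : ℝ) + 1 / 2) * Real.pi * (a + b) / 2))
      (s1 := Real.sin ((k : ℝ) * Real.pi * b))
      (s2 := Real.sin (Real.pi * (a + b) / 4))
      (s3 := Real.sin (((k : ℝ) + 1) * Real.pi * (a - b) / 2))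
      (Real.abs_cos_le_one _)
      (habs _ (by positivity))
      (habs _ (by positivity))
      (Real.abs_sin_le_one _)
      hd1 hd2 hd3 hE1 hE2 hE3
    refine le_trans key ?_
    rw [div_le_div_iff₀ (by positivity) ha]
    nlinarith [mul_nonneg (mul_nonneg (mul_nonneg hk hb0) (by linarith : (0:ℝ) ≤ a + b)) ha.le,
      mul_nonneg (mul_nonneg (mul_nonneg hk hb0) (by linarith : (0:ℝ) ≤ a + b)) (by linarith : (0:ℝ) ≤ a - 3*b),
      mul_le_mul hpi4 hpi4 hpi.le (by norm_num : (0:ℝ) ≤ 4)]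
  · -- Dstar3
    have key := aux_key (c := Real.cos (((k : ℝ) + 1 / 2) * Real.pi * (a - b) / 2))
      (s1 := Real.sin ((k : ℝ) * Real.pi * b))
      (s2 := Real.sin ((k : ℝ) * Real.pi * (a + b) / 2))
      (s3 := Real.sin (Real.pi * (a - b) / 4))
      (Real.abs_cos_le_one _)
      (habs _ (by positivity))
      (Real.abs_sin_le_one _)
      (habs _ (by nlinarith))
      hd1 hd2 hd3 hE1 hE2 hE3
    refine le_trans key ?_
    rw [div_le_div_iff₀ (by positivity) ha]
    nlinarith [mul_nonneg (mul_nonneg (mul_nonneg hk hb0) hab.le) ha.le,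
      mul_nonneg (mul_nonneg (mul_nonneg hk hb0) hab.le) hb0,
      mul_le_mul hpi4 hpi4 hpi.le (by norm_num : (0:ℝ) ≤ 4)]
end
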